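/- Under the stated hypotheses, for all indices i, j with 1 ≤ i, i+2 ≤ j ≤ n−1, the following identity holds in M: 1 = (v_{i−1} ⋯ v₂v₁)(v_i ⋯ v₃v₂)(v_{j−1} ⋯ v₄v₃)(v_j ⋯ v₅v₄)(v₂v₃ ⋯ v_{i+2})(v₁v₂ ⋯ v_{i+1})(v₂v₃ ⋯ v_j)(v₁v₂ ⋯ v_{j−1}), where a product over an empty range of indices is interpreted as 1. -/

import Mathlib

/-!
Write `A a b = v a ⋯ v b` for `ascV v a b`. Since the `v k` square to `1`, `descV v a b` is a left
inverse of `A a b`, so it suffices to show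
`A 2 (i+2) · A 1 (i+1) · A 2 j · A 1 (j-1) = A 4 j · A 3 (j-1) · A 2 i · A 1 (i-1)`.
The braid and far-commutation relations give `A a b · v m = v (m+1) · A a b` for `a ≤ m < b`, so
`A a b` conjugates `A c d` into `A (c+1) (d+1)` when `[c, d+1] ⊆ [a, b]`. Pushing a word `A b m`
through the staircase `A (a+1) (k+1) · A a k` therefore shifts it twice; the letters `v k` and
`v (k+1)` it shares with the two steps cancel, and what remains of the staircase is
`A (a+1) k · A a (k-1)`. Two such moves turn the left-hand side into the right-hand side.
-/

namespace VSBpaper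

/-- `ascV v a b = v a * v (a+1) * ⋯ * v b` (equal to `1` when `b < a`). -/
def ascV {M : Type*} [Monoid M] (v : ℕ → M) (a b : ℕ) : M :=
  ((List.range' a (b + 1 - a)).map v).prod

/-- `descV v a b = v b * v (b-1) * ⋯ * v a` (equal to `1` when `b < a`). -/
def descV {M : Type*} [Monoid M] (v : ℕ → M) (a b : ℕ) : M :=
  (((List.range' a (b + 1 - a)).map v).reverse).prod

theorem _root_.List.reverse_prod_mul_prod_eq_one {M : Type*} [Monoid M] :
    ∀ {l : List M}, (∀ x ∈ l, x * x = 1) → l.reverse.prod * l.prod = 1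
  | [], _ => by simp
  | x :: t, h => by
    rw [List.reverse_cons, List.prod_append, List.prod_singleton, List.prod_cons, mul_assoc,
      ← mul_assoc x, h x List.mem_cons_self, one_mul,
      List.reverse_prod_mul_prod_eq_one fun y hy => h y (List.mem_cons_of_mem x hy)]

theorem semiconjBy_prod_range' {M : Type*} [Monoid M] {x : M} (f : ℕ → M) :
    ∀ {c L : ℕ}, (∀ m, c ≤ m → m < c + L → SemiconjBy x (f m) (f (m + 1))) →
      SemiconjBy x ((List.range' c L).map f).prod ((List.range' (c + 1) L).map f).prod
  | _, 0, _ => SemiconjBy.one_right x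
  | c, L + 1, h => by
    simp only [List.range'_succ, List.map_cons, List.prod_cons]
    exact (h c le_rfl (by omega)).mul_right
      (semiconjBy_prod_range' f fun m h₁ h₂ => h m (by omega) (by omega))

section

variable {M : Type*} [Monoid M] (v : ℕ → M) {a b c : ℕ}

theorem ascV_self (a : ℕ) : ascV v a a = v a := by
  simp [ascV]

theorem ascV_mul_ascV (h₁ : a ≤ b + 1) (h₂ : b ≤ c) :
    ascV v a b * ascV v (b + 1) c = ascV v a c := by
  rw [ascV, ascV, ascV, ← List.prod_append, ← List.map_append,
    show c + 1 - a = (b + 1 - a) + (c + 1 - (b + 1)) by omega, ← List.range'_append_1,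
    show a + (b + 1 - a) = b + 1 by omega]

theorem ascV_eq_mul_ascV (h : a ≤ b) : ascV v a b = v a * ascV v (a + 1) b := by
  rw [← ascV_mul_ascV v (b := a) (Nat.le_succ a) h, ascV_self]

theorem ascV_succ (h : a ≤ b + 1) : ascV v a (b + 1) = ascV v a b * v (b + 1) := by
  rw [← ascV_mul_ascV v h (Nat.le_succ b), ascV_self]

def FarCommute (N : ℕ) : Prop :=
  ∀ i j : ℕ, 1 ≤ i → i ≤ N → 1 ≤ j → j ≤ N → (i + 1 < j ∨ j + 1 < i) → v i * v j = v j * v i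

def BraidRelations (N : ℕ) : Prop :=
  ∀ i j : ℕ, 1 ≤ i → i ≤ N → 1 ≤ j → j ≤ N → (i + 1 = j ∨ j + 1 = i) →
    v i * v j * v i = v j * v i * v j

def SquaresEqOne (N : ℕ) : Prop :=
  ∀ i : ℕ, 1 ≤ i → i ≤ N → v i * v i = 1

variable {v} {N d k m : ℕ}

theorem descV_mul_ascV (hs : SquaresEqOne v N) (ha : 1 ≤ a) (hb : b ≤ N) :
    descV v a b * ascV v a b = 1 :=
  List.reverse_prod_mul_prod_eq_one fun x hx => by
    obtain ⟨k, hk, rfl⟩ := List.mem_map.1 hx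
    rw [List.mem_range'_1] at hk
    exact hs k (by omega) (by omega)

theorem commute_ascV_v (hc : FarCommute v N) (ha : 1 ≤ a) (hb : b ≤ N) (hm : 1 ≤ m)
    (hmN : m ≤ N) (hfar : b + 1 < m ∨ m + 1 < a) : Commute (ascV v a b) (v m) :=
  Commute.list_prod_left _ _ fun x hx => by
    obtain ⟨k, hk, rfl⟩ := List.mem_map.1 hx
    rw [List.mem_range'_1] at hk
    exact hc k m (by omega) (by omega) hm hmN (by omega)

theorem commute_ascV_ascV (hc : FarCommute v N) (ha : 1 ≤ a) (hd : d ≤ N) (hbc : b + 1 < c) :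
    Commute (ascV v a b) (ascV v c d) :=
  Commute.list_prod_right _ _ fun x hx => by
    obtain ⟨k, hk, rfl⟩ := List.mem_map.1 hx
    rw [List.mem_range'_1] at hk
    exact commute_ascV_v hc ha (by omega) (by omega) (by omega) (by omega)

theorem semiconjBy_ascV_v (hbr : BraidRelations v N) (hc : FarCommute v N) (ha : 1 ≤ a)
    (ham : a ≤ m) (hmb : m < b) (hb : b ≤ N) : SemiconjBy (ascV v a b) (v m) (v (m + 1)) := by
  obtain ⟨l, rfl⟩ : ∃ l, m = l + 1 := ⟨m - 1, by omega⟩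
  have hsplit : ascV v a b = ascV v a l * (v (l + 1) * v (l + 2)) * ascV v (l + 3) b := by
    rw [← ascV_mul_ascV v (b := l) (by omega) (by omega),
      ascV_eq_mul_ascV v (a := l + 1) (by omega), ascV_eq_mul_ascV v (a := l + 2) (by omega)]
    simp only [mul_assoc]
  have hbraid : SemiconjBy (v (l + 1) * v (l + 2)) (v (l + 1)) (v (l + 2)) := by
    simpa only [SemiconjBy, mul_assoc] using hbr (l + 1) (l + 2) (by omega) (by omega) (by omega)
      (by omega) (Or.inl rfl)
  rw [hsplit]
  refine SemiconjBy.mul_left (SemiconjBy.mul_left ?_ hbraid) ?_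
  · exact commute_ascV_v hc ha (by omega) (by omega) (by omega) (by omega)
  · exact commute_ascV_v hc (by omega) hb (by omega) (by omega) (by omega)

theorem semiconjBy_ascV_ascV (hbr : BraidRelations v N) (hc : FarCommute v N) (ha : 1 ≤ a)
    (hac : a ≤ c) (hdb : d < b) (hb : b ≤ N) :
    SemiconjBy (ascV v a b) (ascV v c d) (ascV v (c + 1) (d + 1)) := by
  rw [ascV, ascV, ascV, show d + 1 + 1 - (c + 1) = d + 1 - c by omega]
  exact semiconjBy_prod_range' v fun m h₁ h₂ =>
    semiconjBy_ascV_v hbr hc ha (by omega) (by omega) hb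

theorem ascV_mul_ascV_of_overlap (hs : SquaresEqOne v N) (h₁ : a ≤ b + 1) (h₂ : b + 1 ≤ c)
    (hb : b + 1 ≤ N) : ascV v a (b + 1) * ascV v (b + 1) c = ascV v a b * ascV v (b + 2) c := by
  rw [ascV_succ v h₁, ascV_eq_mul_ascV v h₂, mul_assoc, ← mul_assoc (v (b + 1)),
    hs (b + 1) (by omega) hb, one_mul]

theorem ascV_stair_mul_ascV (hbr : BraidRelations v N) (hc : FarCommute v N)
    (hs : SquaresEqOne v N) (ha : 1 ≤ a) (hab : a ≤ b) (hbk : b ≤ k) (hkm : k < m) (hm : m ≤ N) :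
    ascV v (a + 1) (k + 1) * ascV v a k * ascV v b m =
      ascV v (b + 2) m * (ascV v (a + 1) k * ascV v a (k - 1)) := by
  obtain ⟨k, rfl⟩ : ∃ l, k = l + 1 := ⟨k - 1, by omega⟩
  have hshift₁ : ascV v a (k + 1) * ascV v b k = ascV v (b + 1) (k + 1) * ascV v a (k + 1) :=
    semiconjBy_ascV_ascV hbr hc ha hab (by omega) (by omega)
  have hshift₂ : ascV v (a + 1) (k + 2) * ascV v (b + 1) (k + 1) =
      ascV v (b + 2) (k + 2) * ascV v (a + 1) (k + 2) :=
    semiconjBy_ascV_ascV hbr hc (by omega) (by omega) (by omega) (by omega)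
  have hcancel₁ : ascV v a (k + 1) * ascV v (k + 1) m = ascV v a k * ascV v (k + 2) m :=
    ascV_mul_ascV_of_overlap hs (by omega) (by omega) (by omega)
  have hcancel₂ : ascV v (a + 1) (k + 2) * ascV v (k + 2) m =
      ascV v (a + 1) (k + 1) * ascV v (k + 3) m :=
    ascV_mul_ascV_of_overlap hs (by omega) (by omega) (by omega)
  have hcomm₁ : Commute (ascV v a k) (ascV v (k + 2) m) :=
    commute_ascV_ascV hc ha hm (by omega)
  have hcomm₂ : Commute (ascV v (a + 1) (k + 1)) (ascV v (k + 3) m) :=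
    commute_ascV_ascV hc (by omega) hm (by omega)
  have hconcat : ascV v (b + 2) (k + 2) * ascV v (k + 3) m = ascV v (b + 2) m :=
    ascV_mul_ascV v (by omega) (by omega)
  calc ascV v (a + 1) (k + 1 + 1) * ascV v a (k + 1) * ascV v b m
      = ascV v (a + 1) (k + 2) * (ascV v a (k + 1) * ascV v b k) * ascV v (k + 1) m := by
        rw [← ascV_mul_ascV v (b := k) (c := m) (by omega) (by omega)]
        simp only [mul_assoc]
    _ = ascV v (b + 2) (k + 2) * ascV v (a + 1) (k + 2) * (ascV v (k + 2) m * ascV v a k) := by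
        rw [hshift₁, ← mul_assoc, hshift₂, mul_assoc, hcancel₁, hcomm₁.eq]
    _ = ascV v (b + 2) (k + 2) * (ascV v (k + 3) m * ascV v (a + 1) (k + 1)) * ascV v a k := by
        rw [mul_assoc (ascV v (b + 2) (k + 2)), ← mul_assoc (ascV v (a + 1) (k + 2)), hcancel₂,
          hcomm₂.eq]
        simp only [mul_assoc]
    _ = ascV v (b + 2) m * (ascV v (a + 1) (k + 1) * ascV v a (k + 1 - 1)) := by
        rw [Nat.add_sub_cancel, ← hconcat]
        simp only [mul_assoc]

end

theorem v_one_identity_general {M : Type*} [Monoid M] (n : ℕ) (v : ℕ → M)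
    (hvbraid : ∀ i j : ℕ, 1 ≤ i → i ≤ n - 1 → 1 ≤ j → j ≤ n - 1 → (i + 1 = j ∨ j + 1 = i) →
      v i * v j * v i = v j * v i * v j)
    (hvcomm : ∀ i j : ℕ, 1 ≤ i → i ≤ n - 1 → 1 ≤ j → j ≤ n - 1 → (i + 1 < j ∨ j + 1 < i) →
      v i * v j = v j * v i)
    (hvsq : ∀ i : ℕ, 1 ≤ i → i ≤ n - 1 → v i * v i = 1) :
    ∀ i j : ℕ, 1 ≤ i → i + 2 ≤ j → j ≤ n - 1 →
      (1 : M) =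
        descV v 1 (i - 1) * descV v 2 i * descV v 3 (j - 1) * descV v 4 j *
          ascV v 2 (i + 2) * ascV v 1 (i + 1) * ascV v 2 j * ascV v 1 (j - 1) := by
  intro i j hi hij hjn
  have hstair₁ : ascV v 2 (i + 2) * ascV v 1 (i + 1) * ascV v 2 j =
      ascV v 4 j * (ascV v 2 (i + 1) * ascV v 1 i) :=
    ascV_stair_mul_ascV (a := 1) (b := 2) (k := i + 1) hvbraid hvcomm hvsq le_rfl (by omega)
      (by omega) (by omega) hjn
  have hstair₂ : ascV v 2 (i + 1) * ascV v 1 i * ascV v 1 (j - 1) =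
      ascV v 3 (j - 1) * (ascV v 2 i * ascV v 1 (i - 1)) :=
    ascV_stair_mul_ascV (a := 1) (b := 1) (k := i) hvbraid hvcomm hvsq le_rfl le_rfl hi
      (by omega) (by omega)
  have hword : ascV v 2 (i + 2) * ascV v 1 (i + 1) * ascV v 2 j * ascV v 1 (j - 1) =
      ascV v 4 j * (ascV v 3 (j - 1) * (ascV v 2 i * ascV v 1 (i - 1))) := by
    rw [hstair₁, mul_assoc, hstair₂]
  have hinv {a b : ℕ} (ha : 1 ≤ a) (hb : b ≤ n - 1) : descV v a b * ascV v a b = 1 :=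
    descV_mul_ascV hvsq ha hb
  simp only [mul_assoc] at hword ⊢
  rw [hword, ← mul_assoc (descV v 4 j), hinv (by omega) hjn, one_mul,
    ← mul_assoc (descV v 3 (j - 1)), hinv (by omega) (by omega), one_mul,
    ← mul_assoc (descV v 2 i), hinv (by omega) (by omega), one_mul, hinv le_rfl (by omega)]

/-- **The identity `1 = (v_{i-1}⋯v₁)(v_i⋯v₂)(v_{j-1}⋯v₃)(v_j⋯v₄)(v₂⋯v_{i+2})(v₁⋯v_{i+1})(v₂⋯v_j)(v₁⋯v_{j-1})`**
holding in any monoid `M` whose elements `v 1, …, v (n-1)` satisfy the braid,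
far-commutation, and involution relations, for all indices `1 ≤ i`, `i+2 ≤ j ≤ n-1`.
(A product over an empty range of indices is `1`.) -/
theorem v_one_identity {M : Type*} [Monoid M] (n : ℕ) (hn : 2 ≤ n) (v : ℕ → M)
    (hvbraid : ∀ i j : ℕ, 1 ≤ i → i ≤ n - 1 → 1 ≤ j → j ≤ n - 1 → (i + 1 = j ∨ j + 1 = i) →
      v i * v j * v i = v j * v i * v j)
    (hvcomm : ∀ i j : ℕ, 1 ≤ i → i ≤ n - 1 → 1 ≤ j → j ≤ n - 1 → (i + 1 < j ∨ j + 1 < i) →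
      v i * v j = v j * v i)
    (hvsq : ∀ i : ℕ, 1 ≤ i → i ≤ n - 1 → v i * v i = 1) :
    ∀ i j : ℕ, 1 ≤ i → i + 2 ≤ j → j ≤ n - 1 →
      (1 : M) =
        descV v 1 (i - 1) * descV v 2 i * descV v 3 (j - 1) * descV v 4 j *
          ascV v 2 (i + 2) * ascV v 1 (i + 1) * ascV v 2 j * ascV v 1 (j - 1) :=
  v_one_identity_general n v hvbraid hvcomm hvsq

end VSBpaper
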